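/- Let G be a strongly connected directed graph with N ≥ 2 nodes, let all rates be homogeneous, β_{ij} = β and δ_i = δ, let A be the adjacency matrix of G with Perron root λ_max(A) > 0, and let A_{L(G)} and H be as above. Then at β/δ = 1/λ_max(A) one has λ_max(𝒜) < 0. Consequently ρ(A_{L(G)} + H) − 1 < 2λ_max(A), i.e., the non-backtracking epidemic threshold 2/(ρ(A_{L(G)}+H)−1) is strictly larger than 1/λ_max(A). -/

import Mathlib

open Matrix

def IsMetzler {n : Type*} [Fintype n] [DecidableEq n] (M : Matrix n n ℝ) : Prop :=
  ∀ i j, i ≠ j → 0 ≤ M i j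

def IsIrreducibleMatrix {n : Type*} [Fintype n] (M : Matrix n n ℝ) : Prop :=
  ∀ i j : n, Relation.ReflTransGen (fun a b => a ≠ b ∧ M a b ≠ 0) i j

def IsEigOf {n : Type*} [Fintype n] (M : Matrix n n ℝ) (μ : ℂ) : Prop :=
  ∃ v : n → ℂ, v ≠ 0 ∧ M.map (Complex.ofReal) *ᵥ v = μ • v

noncomputable def lamMax {n : Type*} [Fintype n] (M : Matrix n n ℝ) : ℝ :=
  sSup {x : ℝ | ∃ μ : ℂ, IsEigOf M μ ∧ x = μ.re}

noncomputable def specRad {n : Type*} [Fintype n] (M : Matrix n n ℝ) : ℝ :=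
  sSup {x : ℝ | ∃ μ : ℂ, IsEigOf M μ ∧ x = ‖μ‖}

noncomputable def Cplus {V E : Type*} [DecidableEq V] (tgt : E → V) : Matrix V E ℝ :=
  fun i ℓ => if tgt ℓ = i then 1 else 0

noncomputable def Cminus {V E : Type*} [DecidableEq V] (src : E → V) : Matrix V E ℝ :=
  fun i ℓ => if src ℓ = i then 1 else 0

noncomputable def nbMatrix {V E : Type*} [DecidableEq V] (src tgt : E → V) : Matrix E E ℝ :=
  fun ℓ m => if tgt ℓ = src m ∧ tgt m ≠ src ℓ then 1 else 0

noncomputable def lineAdj {V E : Type*} [DecidableEq V] (src tgt : E → V) : Matrix E E ℝ :=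
  fun ℓ m => if tgt ℓ = src m then 1 else 0

section PFHelpers

set_option linter.unusedSectionVars false
set_option maxHeartbeats 1000000

open Polynomial


variable {n : Type*} [Fintype n] [DecidableEq n]

lemma charpoly_eval' (M : Matrix n n ℂ) (μ : ℂ) :
    M.charpoly.eval μ = (μ • (1 : Matrix n n ℂ) - M).det := by
  rw [Matrix.charpoly, _root_.eval_det, matPolyEquiv_charmatrix]
  simp [Matrix.scalar, smul_one_eq_diagonal]
  congr 1

lemma isEigOf_iff_det (M : Matrix n n ℝ) (μ : ℂ) :
    IsEigOf M μ ↔ (M.map Complex.ofReal - μ • 1).det = 0 := by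
  rw [← Matrix.exists_mulVec_eq_zero_iff]
  constructor
  · rintro ⟨v, hv, h⟩
    exact ⟨v, hv, by rw [Matrix.sub_mulVec, h, Matrix.smul_mulVec, Matrix.one_mulVec,
      sub_self]⟩
  · rintro ⟨v, hv, h⟩
    refine ⟨v, hv, ?_⟩
    rw [Matrix.sub_mulVec, Matrix.smul_mulVec, Matrix.one_mulVec, sub_eq_zero] at h
    exact h

lemma isEigOf_iff_root (M : Matrix n n ℝ) (μ : ℂ) :
    IsEigOf M μ ↔ (M.map Complex.ofReal).charpoly.eval μ = 0 := by
  rw [isEigOf_iff_det, charpoly_eval']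
  have : μ • (1 : Matrix n n ℂ) - M.map Complex.ofReal
      = -(M.map Complex.ofReal - μ • 1) := by rw [neg_sub]
  rw [this, Matrix.det_neg]
  simp

lemma isEigOf_transpose_iff (M : Matrix n n ℝ) (μ : ℂ) :
    IsEigOf Mᵀ μ ↔ IsEigOf M μ := by
  rw [isEigOf_iff_det, isEigOf_iff_det]
  have : (Mᵀ.map Complex.ofReal - μ • 1) = (M.map Complex.ofReal - μ • 1)ᵀ := by
    ext i j
    simp [Matrix.transpose_apply, Matrix.one_apply, eq_comm]
  rw [this, Matrix.det_transpose]

lemma isEigOf_of_real {M : Matrix n n ℝ} {ρ : ℝ} {v : n → ℝ} (hv : v ≠ 0)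
    (h : M *ᵥ v = ρ • v) : IsEigOf M (ρ : ℂ) := by
  refine ⟨fun i => (v i : ℂ), ?_, ?_⟩
  · intro h0
    apply hv
    funext i
    have := congrFun h0 i
    simpa using this
  · funext i
    have hi := congrFun h i
    simp only [Matrix.mulVec, dotProduct, Matrix.map_apply, Pi.smul_apply, smul_eq_mul] at hi ⊢
    push_cast
    exact_mod_cast congrArg (Complex.ofReal) hi

lemma eigSet_finite (M : Matrix n n ℝ) (f : ℂ → ℝ) :
    {x : ℝ | ∃ μ, IsEigOf M μ ∧ x = f μ}.Finite := by
  have h1 : {μ : ℂ | IsEigOf M μ}.Finite := by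
    have hne : (M.map Complex.ofReal).charpoly ≠ 0 :=
      (M.map Complex.ofReal).charpoly_monic.ne_zero
    apply Set.Finite.subset (Polynomial.finite_setOf_isRoot hne)
    intro μ hμ
    exact (isEigOf_iff_root M μ).1 hμ
  apply Set.Finite.subset (h1.image f)
  rintro x ⟨μ, hμ, rfl⟩
  exact ⟨μ, hμ, rfl⟩

lemma eig_nonempty [Nonempty n] (M : Matrix n n ℝ) : ∃ μ, IsEigOf M μ := by
  have hd : 0 < (M.map Complex.ofReal).charpoly.degree := by
    rw [Matrix.charpoly_degree_eq_dim]
    exact_mod_cast Fintype.card_pos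
  obtain ⟨z, hz⟩ := Complex.exists_root hd
  exact ⟨z, (isEigOf_iff_root M z).2 hz⟩


variable {ι : Type*} [Fintype ι] [DecidableEq ι]

lemma mulVec_entry_nonneg {κ : Type*} [Fintype κ] {B : Matrix ι κ ℝ}
    (hB : ∀ i j, 0 ≤ B i j) {v : κ → ℝ} (hv : ∀ j, 0 ≤ v j) (i : ι) :
    0 ≤ (B *ᵥ v) i :=
  Finset.sum_nonneg fun j _ => mul_nonneg (hB i j) (hv j)

lemma mulVec_entry_mono {κ : Type*} [Fintype κ] {B : Matrix ι κ ℝ}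
    (hB : ∀ i j, 0 ≤ B i j) {v v' : κ → ℝ} (h : ∀ j, v j ≤ v' j) (i : ι) :
    (B *ᵥ v) i ≤ (B *ᵥ v') i :=
  Finset.sum_le_sum fun j _ => mul_le_mul_of_nonneg_left (h j) (hB i j)

lemma pow_entry_nonneg {B : Matrix ι ι ℝ} (hB : ∀ i j, 0 ≤ B i j) :
    ∀ (k : ℕ) (i j : ι), 0 ≤ (B ^ k) i j := by
  intro k
  induction k with
  | zero => intro i j; simp [Matrix.one_apply]; positivity
  | succ k ih =>
    intro i j
    rw [pow_succ, Matrix.mul_apply]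
    exact Finset.sum_nonneg fun t _ => mul_nonneg (ih i t) (hB t j)

lemma onePlus_entry_nonneg {B : Matrix ι ι ℝ} (hB : ∀ i j, 0 ≤ B i j) (i j : ι) :
    0 ≤ (1 + B) i j := by
  rw [Matrix.add_apply]
  rcases eq_or_ne i j with h | h
  · subst h; simp [Matrix.one_apply]; linarith [hB i i]
  · simp [Matrix.one_apply, h]; exact hB i j

lemma onePlus_pow_ge_pow {B : Matrix ι ι ℝ} (hB : ∀ i j, 0 ≤ B i j) :
    ∀ (k : ℕ) (i j : ι), (B ^ k) i j ≤ ((1 + B) ^ k) i j := by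
  intro k
  induction k with
  | zero => intro i j; simp
  | succ k ih =>
    intro i j
    have h1 : ((1 + B) ^ (k + 1)) i j
        = ((1 + B) ^ k) i j + (((1 + B) ^ k) * B) i j := by
      rw [pow_succ, mul_add, mul_one, Matrix.add_apply]
    rw [h1, pow_succ, Matrix.mul_apply, Matrix.mul_apply]
    have h2 : ∑ t, (B ^ k) i t * B t j ≤ ∑ t, ((1 + B) ^ k) i t * B t j :=
      Finset.sum_le_sum fun t _ => mul_le_mul_of_nonneg_right (ih i t) (hB t j)
    have h3 : 0 ≤ ((1 + B) ^ k) i j := pow_entry_nonneg (onePlus_entry_nonneg hB) k i j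
    linarith

lemma onePlus_pow_mono_exp {B : Matrix ι ι ℝ} (hB : ∀ i j, 0 ≤ B i j) {k K : ℕ}
    (hkK : k ≤ K) (i j : ι) : ((1 + B) ^ k) i j ≤ ((1 + B) ^ K) i j := by
  induction K, hkK using Nat.le_induction with
  | base => exact le_refl _
  | succ m hm ih =>
    have h1 : ((1 + B) ^ (m + 1)) i j
        = ((1 + B) ^ m) i j + (((1 + B) ^ m) * B) i j := by
      rw [pow_succ, mul_add, mul_one, Matrix.add_apply]
    have h2 : 0 ≤ (((1 + B) ^ m) * B) i j := by
      rw [Matrix.mul_apply]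
      exact Finset.sum_nonneg fun t _ =>
        mul_nonneg (pow_entry_nonneg (onePlus_entry_nonneg hB) m i t) (hB t j)
    rw [h1]
    linarith

lemma continuousOn_finset_inf' {α : Type*} [TopologicalSpace α] {s : Finset ι}
    (hs : s.Nonempty) {f : ι → α → ℝ} {t : Set α} (hf : ∀ i ∈ s, ContinuousOn (f i) t) :
    ContinuousOn (fun x => s.inf' hs fun i => f i x) t :=
  ContinuousOn.finset_inf'_apply hs hf


variable {ι : Type*} [Fintype ι] [DecidableEq ι]


lemma continuous_mulVec_apply {κ : Type*} [Fintype κ] (M : Matrix ι κ ℝ) (i : ι) :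
    Continuous fun u : κ → ℝ => (M *ᵥ u) i := by
  simp only [Matrix.mulVec, dotProduct]
  exact continuous_finset_sum _ fun j _ => continuous_const.mul (continuous_apply j)

lemma collatz_wielandt [Nonempty ι]
    (B : Matrix ι ι ℝ) (hB : ∀ i j, 0 ≤ B i j)
    (hirr : ∀ i j, ∃ n, 0 < (B ^ n) i j)
    {w : ι → ℝ} {c : ℝ} (hc : 0 < c) (hw0 : ∀ i, 0 ≤ w i) (hwne : w ≠ 0)
    (hw : ∀ i, c * w i ≤ (B *ᵥ w) i) :
    ∃ ρ : ℝ, c ≤ ρ ∧ ∃ v : ι → ℝ, (∀ i, 0 ≤ v i) ∧ v ≠ 0 ∧ B *ᵥ v = ρ • v := by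
  classical
  choose nf hnf using hirr
  set K := Finset.univ.sup (fun p : ι × ι => nf p.1 p.2) with hK
  set P := (1 + B) ^ K with hP
  have hPpos : ∀ i j, 0 < P i j := by
    intro i j
    have h1 : nf i j ≤ K := Finset.le_sup (f := fun p : ι × ι => nf p.1 p.2)
      (Finset.mem_univ (i, j))
    calc (0:ℝ) < (B ^ nf i j) i j := hnf i j
    _ ≤ ((1+B) ^ nf i j) i j := onePlus_pow_ge_pow hB _ i j
    _ ≤ P i j := onePlus_pow_mono_exp hB h1 i j
  have hPnn : ∀ i j, 0 ≤ P i j := fun i j => (hPpos i j).le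
  have hPB : P * B = B * P := by
    have h := ((Commute.one_left B).add_left (Commute.refl B)).pow_left K
    exact h.eq
  have hPz : ∀ z : ι → ℝ, (∀ i, 0 ≤ z i) → z ≠ 0 → ∀ i, 0 < (P *ᵥ z) i := by
    intro z hz hzne i
    obtain ⟨j0, hj0⟩ : ∃ j, z j ≠ 0 := Function.ne_iff.1 hzne
    have hj0' : 0 < z j0 := lt_of_le_of_ne (hz j0) (Ne.symm hj0)
    have h2 : P i j0 * z j0 ≤ (P *ᵥ z) i := by
      rw [Matrix.mulVec, dotProduct]
      exact Finset.single_le_sum (fun t _ => mul_nonneg (hPnn i t) (hz t)) (Finset.mem_univ j0)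
    have h3 := mul_pos (hPpos i j0) hj0'
    linarith
  set Δ : Set (ι → ℝ) := {u | (∀ i, 0 ≤ u i) ∧ ∑ i, u i = 1} with hΔ
  have hΔmem : ∀ u ∈ Δ, (∀ i, 0 ≤ u i) ∧ u ≠ 0 := by
    rintro u ⟨h0, h1⟩
    refine ⟨h0, fun h => ?_⟩
    rw [h] at h1
    simp at h1
  have hΔsub : Δ ⊆ Set.Icc 0 1 := by
    rintro u ⟨h0, h1⟩
    constructor
    · intro i; exact h0 i
    · intro i
      have := Finset.single_le_sum (fun t _ => h0 t) (Finset.mem_univ i)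
      rw [h1] at this
      exact this
  have hclosed : IsClosed Δ := by
    have h1 : Δ = (⋂ i : ι, {u : ι → ℝ | 0 ≤ u i}) ∩ {u : ι → ℝ | ∑ i, u i = 1} := by
      ext u
      simp only [hΔ, Set.mem_setOf_eq, Set.mem_inter_iff, Set.mem_iInter]
    rw [h1]
    refine IsClosed.inter (isClosed_iInter fun i => ?_) ?_
    · exact isClosed_le continuous_const (continuous_apply i)
    · exact isClosed_eq (continuous_finset_sum _ fun i _ => continuous_apply i) continuous_const
  have hΔcompact : IsCompact Δ := (isCompact_Icc).of_isClosed_subset hclosed hΔsub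
  have hnorm : ∀ z : ι → ℝ, (∀ i, 0 ≤ z i) → z ≠ 0 →
      (0 < ∑ i, z i) ∧ ((∑ i, z i)⁻¹ • z) ∈ Δ := by
    intro z hz hzne
    obtain ⟨j0, hj0⟩ : ∃ j, z j ≠ 0 := Function.ne_iff.1 hzne
    have hj0' : 0 < z j0 := lt_of_le_of_ne (hz j0) (Ne.symm hj0)
    have hs : 0 < ∑ i, z i := by
      have h2 : z j0 ≤ ∑ i, z i := Finset.single_le_sum (fun t _ => hz t) (Finset.mem_univ j0)
      linarith
    refine ⟨hs, ⟨fun i => ?_, ?_⟩⟩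
    · have : 0 ≤ (∑ i, z i)⁻¹ := by positivity
      exact mul_nonneg this (hz i)
    · simp only [Pi.smul_apply, smul_eq_mul, ← Finset.mul_sum]
      field_simp
  have hne : (Finset.univ : Finset ι).Nonempty := Finset.univ_nonempty
  set g : (ι → ℝ) → ℝ :=
    fun u => Finset.univ.inf' hne fun i => (B *ᵥ (P *ᵥ u)) i / (P *ᵥ u) i with hg
  have hgcont : ContinuousOn g Δ := by
    apply continuousOn_finset_inf'
    intro i _
    apply ContinuousOn.div
    · exact ((continuous_mulVec_apply B i).comp
        (continuous_pi fun j => continuous_mulVec_apply P j)).continuousOn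
    · exact (continuous_mulVec_apply P i).continuousOn
    · intro u hu
      obtain ⟨h0, hne0⟩ := hΔmem u hu
      exact (hPz u h0 hne0 i).ne'
  have hpush : ∀ (θ : ℝ) (z : ι → ℝ), (∀ i, 0 ≤ z i) → (∀ i, θ * z i ≤ (B *ᵥ z) i) →
      ∀ i, θ * (P *ᵥ z) i ≤ (B *ᵥ (P *ᵥ z)) i := by
    intro θ z hz hθ i
    have h1 : B *ᵥ (P *ᵥ z) = P *ᵥ (B *ᵥ z) := by
      rw [Matrix.mulVec_mulVec, Matrix.mulVec_mulVec, hPB]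
    rw [h1]
    have h2 : (P *ᵥ (fun j => θ * z j)) i ≤ (P *ᵥ (B *ᵥ z)) i :=
      mulVec_entry_mono hPnn (fun j => hθ j) i
    have h3 : (P *ᵥ (fun j => θ * z j)) i = θ * (P *ᵥ z) i := by
      simp only [Matrix.mulVec, dotProduct, Finset.mul_sum]
      exact Finset.sum_congr rfl fun j _ => by ring
    linarith
  have hglb : ∀ (θ : ℝ) (u : ι → ℝ), u ∈ Δ → (∀ i, θ * u i ≤ (B *ᵥ u) i) → θ ≤ g u := by
    intro θ u hu hθ
    apply Finset.le_inf'
    intro i _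
    obtain ⟨h0, hne0⟩ := hΔmem u hu
    rw [le_div_iff₀ (hPz u h0 hne0 i)]
    exact hpush θ u h0 hθ i
  -- nonemptiness of Δ via normalized w
  obtain ⟨hsw, hwΔ⟩ := hnorm w hw0 hwne
  obtain ⟨u0, hu0Δ, hu0max'⟩ := hΔcompact.exists_isMaxOn ⟨_, hwΔ⟩ hgcont
  have hu0max : ∀ u ∈ Δ, g u ≤ g u0 := fun u hu => hu0max' hu
  set ρ := g u0 with hρ
  set v := P *ᵥ u0 with hv
  have hvpos : ∀ i, 0 < v i := hPz u0 (hΔmem u0 hu0Δ).1 (hΔmem u0 hu0Δ).2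
  have hvne : v ≠ 0 := by
    intro h
    have := hvpos (Classical.arbitrary ι)
    rw [h] at this
    simp at this
  have hvB : ∀ i, ρ * v i ≤ (B *ᵥ v) i := by
    intro i
    have h1 : ρ ≤ (B *ᵥ v) i / v i := Finset.inf'_le _ (Finset.mem_univ i)
    rw [le_div_iff₀ (hvpos i)] at h1
    linarith
  have hρc : c ≤ ρ := by
    have hscaled : ∀ i, c * ((∑ j, w j)⁻¹ • w) i ≤ (B *ᵥ ((∑ j, w j)⁻¹ • w)) i := by
      intro i
      rw [Matrix.mulVec_smul]
      simp only [Pi.smul_apply, smul_eq_mul]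
      have h2 : 0 ≤ (∑ j, w j)⁻¹ := by positivity
      calc c * ((∑ j, w j)⁻¹ * w i) = (∑ j, w j)⁻¹ * (c * w i) := by ring
      _ ≤ (∑ j, w j)⁻¹ * (B *ᵥ w) i := mul_le_mul_of_nonneg_left (hw i) h2
    have := hglb c _ hwΔ hscaled
    exact le_trans this (hu0max _ hwΔ)
  have heq : B *ᵥ v = ρ • v := by
    by_contra hne2
    set z := B *ᵥ v - ρ • v with hz2
    have hz0 : ∀ i, 0 ≤ z i := by
      intro i
      simp only [hz2, Pi.sub_apply, Pi.smul_apply, smul_eq_mul]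
      linarith [hvB i]
    have hzne : z ≠ 0 := fun h => hne2 (by rwa [hz2, sub_eq_zero] at h)
    have hPzpos : ∀ i, 0 < (P *ᵥ z) i := hPz z hz0 hzne
    set v' := P *ᵥ v with hv'
    have hv'pos : ∀ i, 0 < v' i := hPz v (fun i => (hvpos i).le) hvne
    have hv'ne : v' ≠ 0 := by
      intro h
      have := hv'pos (Classical.arbitrary ι)
      rw [h] at this
      simp at this
    have hBv' : B *ᵥ v' = ρ • v' + P *ᵥ z := by
      have h1 : B *ᵥ v = ρ • v + z := by rw [hz2]; abel
      rw [hv', Matrix.mulVec_mulVec, ← hPB, ← Matrix.mulVec_mulVec, h1,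
        Matrix.mulVec_add, Matrix.mulVec_smul]
    set ε := Finset.univ.inf' hne (fun i => (P *ᵥ z) i / v' i) with hε
    have hεpos : 0 < ε := by
      rw [hε, Finset.lt_inf'_iff]
      exact fun i _ => div_pos (hPzpos i) (hv'pos i)
    have hv'B : ∀ i, (ρ + ε) * v' i ≤ (B *ᵥ v') i := by
      intro i
      have h1 : ε ≤ (P *ᵥ z) i / v' i := Finset.inf'_le _ (Finset.mem_univ i)
      rw [le_div_iff₀ (hv'pos i)] at h1
      have h2 : (B *ᵥ v') i = ρ * v' i + (P *ᵥ z) i := by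
        rw [hBv']
        simp [Pi.add_apply, Pi.smul_apply, smul_eq_mul]
      rw [h2]
      nlinarith
    obtain ⟨hs', hv'Δ⟩ := hnorm v' (fun i => (hv'pos i).le) hv'ne
    have hscaled : ∀ i, (ρ + ε) * ((∑ j, v' j)⁻¹ • v') i ≤ (B *ᵥ ((∑ j, v' j)⁻¹ • v')) i := by
      intro i
      rw [Matrix.mulVec_smul]
      simp only [Pi.smul_apply, smul_eq_mul]
      have h2 : 0 ≤ (∑ j, v' j)⁻¹ := by positivity
      calc (ρ + ε) * ((∑ j, v' j)⁻¹ * v' i) = (∑ j, v' j)⁻¹ * ((ρ + ε) * v' i) := by ring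
      _ ≤ (∑ j, v' j)⁻¹ * (B *ᵥ v') i := mul_le_mul_of_nonneg_left (hv'B i) h2
    have h3 := hglb (ρ + ε) _ hv'Δ hscaled
    have h4 := hu0max _ hv'Δ
    linarith
  exact ⟨ρ, hρc, v, fun i => (hvpos i).le, hvne, heq⟩







section Graph

variable {N Mn : ℕ} (src tgt : Fin Mn → Fin N)

lemma pow_pos_trans {ι : Type*} [Fintype ι] [DecidableEq ι] {B : Matrix ι ι ℝ}
    (hB : ∀ i j, 0 ≤ B i j) {a b : ℕ} {i k j : ι}
    (h1 : 0 < (B ^ a) i k) (h2 : 0 < (B ^ b) k j) : 0 < (B ^ (a + b)) i j := by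
  rw [pow_add, Matrix.mul_apply]
  have h3 : (B ^ a) i k * (B ^ b) k j ≤ ∑ t, (B ^ a) i t * (B ^ b) t j :=
    Finset.single_le_sum
      (fun t _ => mul_nonneg (pow_entry_nonneg hB a i t) (pow_entry_nonneg hB b t j))
      (Finset.mem_univ k)
  have h4 := mul_pos h1 h2
  linarith

lemma lineAdj_nonneg : ∀ ℓ m, 0 ≤ lineAdj src tgt ℓ m := by
  intro ℓ m
  unfold lineAdj
  split <;> norm_num

lemma lineAdj_reach
    (hconn : ∀ i j : Fin N,
      Relation.ReflTransGen (fun a b => ∃ ℓ, src ℓ = a ∧ tgt ℓ = b) i j) :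
    ∀ ℓ m : Fin Mn, ∃ n, 0 < ((lineAdj src tgt) ^ n) ℓ m := by
  have hstep : ∀ e f : Fin Mn, tgt e = src f → 0 < ((lineAdj src tgt) ^ 1) e f := by
    intro e f h
    rw [pow_one]
    unfold lineAdj
    rw [if_pos h]
    norm_num
  intro ℓ m
  have main : ∀ x, Relation.ReflTransGen (fun a b => ∃ e, src e = a ∧ tgt e = b) (tgt ℓ) x →
      ∃ e, tgt e = x ∧ ∃ n, 0 < ((lineAdj src tgt) ^ n) ℓ e := by
    intro x hx
    induction hx with
    | refl => exact ⟨ℓ, rfl, 0, by simp [Matrix.one_apply]⟩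
    | @tail b c hab hbc ih =>
      obtain ⟨e, he, n, hpos⟩ := ih
      obtain ⟨f, hf1, hf2⟩ := hbc
      exact ⟨f, hf2, n + 1,
        pow_pos_trans (lineAdj_nonneg src tgt) hpos (hstep e f (he.trans hf1.symm))⟩
  obtain ⟨e, he, n, hpos⟩ := main (src m) (hconn (tgt ℓ) (src m))
  exact ⟨n + 1, pow_pos_trans (lineAdj_nonneg src tgt) hpos (hstep e m he)⟩

lemma idL : (Cplus tgt)ᵀ * Cminus src = lineAdj src tgt := by
  ext ℓ m
  rw [Matrix.mul_apply]
  simp only [Matrix.transpose_apply, Cplus, Cminus, lineAdj]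
  rw [Finset.sum_eq_single (tgt ℓ)]
  · simp [eq_comm]
  · intro b _ hb
    rw [if_neg (fun h => hb h.symm), zero_mul]
  · simp

lemma idA (hinj : Function.Injective fun ℓ => (src ℓ, tgt ℓ))
    (A : Matrix (Fin N) (Fin N) ℝ)
    (hA : ∀ i j, A i j = if ∃ ℓ, src ℓ = i ∧ tgt ℓ = j then 1 else 0) :
    Cminus src * (Cplus tgt)ᵀ = A := by
  ext i j
  rw [Matrix.mul_apply, hA i j]
  simp only [Matrix.transpose_apply, Cplus, Cminus]
  by_cases h : ∃ ℓ, src ℓ = i ∧ tgt ℓ = j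
  · obtain ⟨ℓ0, h1, h2⟩ := h
    rw [if_pos ⟨ℓ0, h1, h2⟩, Finset.sum_eq_single ℓ0]
    · rw [if_pos h1, if_pos h2, one_mul]
    · intro b _ hb
      by_cases hb1 : src b = i
      · by_cases hb2 : tgt b = j
        · exfalso
          apply hb
          apply hinj
          simp [hb1, hb2, h1, h2]
        · rw [if_neg hb2, mul_zero]
      · rw [if_neg hb1, zero_mul]
    · simp
  · rw [if_neg h]
    apply Finset.sum_eq_zero
    intro b _
    by_cases hb1 : src b = i
    · by_cases hb2 : tgt b = j
      · exact absurd ⟨b, hb1, hb2⟩ h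
      · rw [if_neg hb2, mul_zero]
    · rw [if_neg hb1, zero_mul]

end Graph

lemma mulVec_entry_mono_mat {ι κ : Type*} [Fintype κ] {Q Q' : Matrix ι κ ℝ}
    (h : ∀ i j, Q i j ≤ Q' i j) {v : κ → ℝ} (hv : ∀ j, 0 ≤ v j) (i : ι) :
    (Q *ᵥ v) i ≤ (Q' *ᵥ v) i :=
  Finset.sum_le_sum fun j _ => mul_le_mul_of_nonneg_right (h i j) (hv j)

lemma mulVec_scal {ι κ : Type*} [Fintype κ] (Q : Matrix ι κ ℝ) (a : ℝ) (z : κ → ℝ) (i : ι) :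
    (Q *ᵥ fun j => a * z j) i = a * (Q *ᵥ z) i := by
  simp only [Matrix.mulVec, dotProduct, Finset.mul_sum]
  exact Finset.sum_congr rfl fun j _ => by ring

lemma abs_mulVec_le {a b : Type*} [Fintype b] {Q : Matrix a b ℝ} (hQ : ∀ i j, 0 ≤ Q i j)
    (z : b → ℂ) (i : a) :
    ‖((Q.map (Complex.ofReal)) *ᵥ z) i‖ ≤ (Q *ᵥ fun j => ‖z j‖) i := by
  simp only [Matrix.mulVec, dotProduct, Matrix.map_apply]
  calc ‖∑ j, (Q i j : ℂ) * z j‖ ≤ ∑ j, ‖(Q i j : ℂ) * z j‖ := norm_sum_le _ _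
  _ = ∑ j, Q i j * ‖z j‖ := Finset.sum_congr rfl fun j _ => by
      rw [norm_mul, Complex.norm_real, Real.norm_eq_abs, abs_of_nonneg (hQ i j)]

lemma real_eig_le_lamMax {n : Type*} [Fintype n] [DecidableEq n] {M : Matrix n n ℝ} {ρ : ℝ}
    (h : IsEigOf M (ρ : ℂ)) : ρ ≤ lamMax M := by
  have hfin := eigSet_finite M Complex.re
  exact le_csSup hfin.bddAbove ⟨(ρ : ℂ), h, by simp⟩

section Graph

variable {N Mn : ℕ} (src tgt : Fin Mn → Fin N)

lemma Cplus_nonneg : ∀ i ℓ, 0 ≤ Cplus tgt i ℓ := by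
  intro i ℓ; unfold Cplus; split <;> norm_num

lemma Cminus_nonneg : ∀ i ℓ, 0 ≤ Cminus src i ℓ := by
  intro i ℓ; unfold Cminus; split <;> norm_num

lemma nb_nonneg : ∀ ℓ m, 0 ≤ nbMatrix src tgt ℓ m := by
  intro ℓ m; unfold nbMatrix; split <;> norm_num

lemma nb_le_lineAdj : ∀ ℓ m, nbMatrix src tgt ℓ m ≤ lineAdj src tgt ℓ m := by
  intro ℓ m; unfold nbMatrix lineAdj
  split
  · rename_i h; rw [if_pos h.1]
  · split <;> norm_num

lemma lineAdjT_nonneg : ∀ ℓ m, 0 ≤ (lineAdj src tgt)ᵀ ℓ m := by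
  intro ℓ m; exact lineAdj_nonneg src tgt m ℓ

lemma lineAdjT_reach
    (hconn : ∀ i j : Fin N,
      Relation.ReflTransGen (fun a b => ∃ ℓ, src ℓ = a ∧ tgt ℓ = b) i j) :
    ∀ ℓ m : Fin Mn, ∃ n, 0 < (((lineAdj src tgt)ᵀ) ^ n) ℓ m := by
  intro ℓ m
  obtain ⟨n, h⟩ := lineAdj_reach src tgt hconn m ℓ
  refine ⟨n, ?_⟩
  rw [← Matrix.transpose_pow]
  exact h

lemma lineAdjT_eq : (lineAdj src tgt)ᵀ = (Cminus src)ᵀ * Cplus tgt := by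
  rw [← idL src tgt, Matrix.transpose_mul, Matrix.transpose_transpose]

lemma cw_to_eig_nt
    (hconn : ∀ i j : Fin N,
      Relation.ReflTransGen (fun a b => ∃ ℓ, src ℓ = a ∧ tgt ℓ = b) i j)
    (hinj : Function.Injective fun ℓ => (src ℓ, tgt ℓ))
    (A : Matrix (Fin N) (Fin N) ℝ)
    (hA : ∀ i j, A i j = if ∃ ℓ, src ℓ = i ∧ tgt ℓ = j then 1 else 0)
    {c : ℝ} (hc : 0 < c) {w : Fin Mn → ℝ} (hw0 : ∀ ℓ, 0 ≤ w ℓ) (hwne : w ≠ 0)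
    (hineq : ∀ ℓ, c * w ℓ ≤ (lineAdj src tgt *ᵥ w) ℓ) : c ≤ lamMax A := by
  obtain ⟨ℓ0, -⟩ := Function.ne_iff.1 hwne
  haveI : Nonempty (Fin Mn) := ⟨ℓ0⟩
  obtain ⟨ρ, hcρ, v, hv0, hvne, hveq⟩ :=
    collatz_wielandt _ (lineAdj_nonneg src tgt) (lineAdj_reach src tgt hconn) hc hw0 hwne hineq
  have hρpos : 0 < ρ := lt_of_lt_of_le hc hcρ
  set u := Cminus src *ᵥ v with hu
  have h1 : A * Cminus src = Cminus src * lineAdj src tgt := by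
    rw [← idA src tgt hinj A hA, ← idL src tgt, Matrix.mul_assoc]
  have hAu : A *ᵥ u = ρ • u := by
    rw [hu, Matrix.mulVec_mulVec, h1, ← Matrix.mulVec_mulVec, hveq, Matrix.mulVec_smul]
  have hune : u ≠ 0 := by
    intro h
    have h2 : lineAdj src tgt *ᵥ v = 0 := by
      rw [← idL src tgt, ← Matrix.mulVec_mulVec, ← hu, h, Matrix.mulVec_zero]
    rw [hveq] at h2
    exact hvne ((smul_eq_zero.1 h2).resolve_left hρpos.ne')
  exact le_trans hcρ (real_eig_le_lamMax (isEigOf_of_real hune hAu))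

lemma cw_to_eig_t
    (hconn : ∀ i j : Fin N,
      Relation.ReflTransGen (fun a b => ∃ ℓ, src ℓ = a ∧ tgt ℓ = b) i j)
    (hinj : Function.Injective fun ℓ => (src ℓ, tgt ℓ))
    (A : Matrix (Fin N) (Fin N) ℝ)
    (hA : ∀ i j, A i j = if ∃ ℓ, src ℓ = i ∧ tgt ℓ = j then 1 else 0)
    {c : ℝ} (hc : 0 < c) {w : Fin Mn → ℝ} (hw0 : ∀ ℓ, 0 ≤ w ℓ) (hwne : w ≠ 0)
    (hineq : ∀ ℓ, c * w ℓ ≤ ((lineAdj src tgt)ᵀ *ᵥ w) ℓ) : c ≤ lamMax A := by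
  obtain ⟨ℓ0, -⟩ := Function.ne_iff.1 hwne
  haveI : Nonempty (Fin Mn) := ⟨ℓ0⟩
  obtain ⟨ρ, hcρ, v, hv0, hvne, hveq⟩ :=
    collatz_wielandt _ (lineAdjT_nonneg src tgt) (lineAdjT_reach src tgt hconn) hc hw0 hwne hineq
  have hρpos : 0 < ρ := lt_of_lt_of_le hc hcρ
  set u := Cplus tgt *ᵥ v with hu
  have h1 : Aᵀ * Cplus tgt = Cplus tgt * (lineAdj src tgt)ᵀ := by
    rw [← idA src tgt hinj A hA, ← idL src tgt, Matrix.transpose_mul, Matrix.transpose_mul,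
      Matrix.transpose_transpose, Matrix.mul_assoc]
  have hAu : Aᵀ *ᵥ u = ρ • u := by
    rw [hu, Matrix.mulVec_mulVec, h1, ← Matrix.mulVec_mulVec, hveq, Matrix.mulVec_smul]
  have hune : u ≠ 0 := by
    intro h
    have h2 : (lineAdj src tgt)ᵀ *ᵥ v = 0 := by
      rw [lineAdjT_eq src tgt, ← Matrix.mulVec_mulVec, ← hu, h, Matrix.mulVec_zero]
    rw [hveq] at h2
    exact hvne ((smul_eq_zero.1 h2).resolve_left hρpos.ne')
  have hAT : IsEigOf Aᵀ (ρ : ℂ) := isEigOf_of_real hune hAu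
  exact le_trans hcρ (real_eig_le_lamMax ((isEigOf_transpose_iff A (ρ : ℂ)).1 hAT))

end Graph

end PFHelpers

set_option maxHeartbeats 2000000 in
theorem stmt17 {N Mn : ℕ} (hN : 2 ≤ N) (src tgt : Fin Mn → Fin N)
    (hloop : ∀ ℓ, src ℓ ≠ tgt ℓ)
    (hinj : Function.Injective fun ℓ => (src ℓ, tgt ℓ))
    (hconn : ∀ i j : Fin N,
      Relation.ReflTransGen (fun a b => ∃ ℓ, src ℓ = a ∧ tgt ℓ = b) i j)
    (A : Matrix (Fin N) (Fin N) ℝ)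
    (hA : ∀ i j, A i j = if ∃ ℓ, src ℓ = i ∧ tgt ℓ = j then 1 else 0)
    (hlam : 0 < lamMax A) :
    (∀ β δ : ℝ, 0 < β → 0 < δ → β / δ = 1 / lamMax A →
      lamMax (Matrix.fromBlocks
          (-(δ • (1 : Matrix (Fin N) (Fin N) ℝ))) (β • Cplus tgt)
          (δ • (Cminus src)ᵀ)
          (β • (nbMatrix src tgt)ᵀ -
            (β + 2 * δ) • (1 : Matrix (Fin Mn) (Fin Mn) ℝ))) < 0) ∧
    specRad (lineAdj src tgt + nbMatrix src tgt) - 1 < 2 * lamMax A := by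
  constructor
  · -- Part 1
    intro β δ hβ hδ hβδ
    have hbl : β * lamMax A = δ := by
      rw [div_eq_div_iff hδ.ne' hlam.ne'] at hβδ
      linarith
    set 𝒜 := Matrix.fromBlocks
          (-(δ • (1 : Matrix (Fin N) (Fin N) ℝ))) (β • Cplus tgt)
          (δ • (Cminus src)ᵀ)
          (β • (nbMatrix src tgt)ᵀ -
            (β + 2 * δ) • (1 : Matrix (Fin Mn) (Fin Mn) ℝ)) with h𝒜
    haveI : Nonempty (Fin N) := ⟨⟨0, by omega⟩⟩
    haveI : Nonempty (Fin N ⊕ Fin Mn) := ⟨Sum.inl ⟨0, by omega⟩⟩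
    obtain ⟨μ0, hμ0⟩ := eig_nonempty 𝒜
    have hSfin := eigSet_finite 𝒜 Complex.re
    have hSne : {x : ℝ | ∃ μ, IsEigOf 𝒜 μ ∧ x = μ.re}.Nonempty := ⟨μ0.re, μ0, hμ0, rfl⟩
    have hdef : lamMax 𝒜 = sSup {x : ℝ | ∃ μ, IsEigOf 𝒜 μ ∧ x = μ.re} := rfl
    obtain ⟨μ, hμ, hre⟩ := hSne.csSup_mem hSfin
    rw [hdef, hre]
    by_contra hcon
    push_neg at hcon
    -- hcon : 0 ≤ μ.re ; derive a contradiction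
    obtain ⟨v, hvne, hveq⟩ := hμ
    set x : Fin N → ℂ := fun i => v (Sum.inl i) with hx
    set y : Fin Mn → ℂ := fun ℓ => v (Sum.inr ℓ) with hy
    have hv : v = Sum.elim x y := by funext t; cases t <;> rfl
    have hmap : 𝒜.map Complex.ofReal = Matrix.fromBlocks
        (-((δ : ℂ) • 1)) ((β : ℂ) • (Cplus tgt).map Complex.ofReal)
        ((δ : ℂ) • ((Cminus src)ᵀ).map Complex.ofReal)
        ((β : ℂ) • ((nbMatrix src tgt)ᵀ).map Complex.ofReal - ((β : ℂ) + 2 * δ) • 1) := by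
      rw [h𝒜]
      ext i j
      cases i <;> cases j <;>
        simp only [Matrix.map_apply, Matrix.fromBlocks_apply₁₁, Matrix.fromBlocks_apply₁₂,
          Matrix.fromBlocks_apply₂₁, Matrix.fromBlocks_apply₂₂, Matrix.neg_apply,
          Matrix.smul_apply, Matrix.sub_apply, Matrix.one_apply, Matrix.transpose_apply,
          smul_eq_mul] <;>
        (first
          | (split_ifs <;> push_cast <;> ring)
          | (push_cast; ring))
    rw [hmap, hv, Matrix.fromBlocks_mulVec] at hveq
    simp only [Sum.elim_comp_inl, Sum.elim_comp_inr] at hveq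
    have E1 : ∀ i, (μ + δ) * x i = (β : ℂ) * (((Cplus tgt).map Complex.ofReal) *ᵥ y) i := by
      intro i
      have h := congrFun hveq (Sum.inl i)
      simp only [Sum.elim_inl, Pi.add_apply, Pi.smul_apply, smul_eq_mul,
        Matrix.neg_mulVec, Matrix.smul_mulVec, Matrix.one_mulVec, Pi.neg_apply] at h
      linear_combination -h
    have E2 : ∀ ℓ, (μ + ((β : ℂ) + 2 * δ)) * y ℓ =
        (δ : ℂ) * ((((Cminus src)ᵀ).map Complex.ofReal) *ᵥ x) ℓ +
        (β : ℂ) * ((((nbMatrix src tgt)ᵀ).map Complex.ofReal) *ᵥ y) ℓ := by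
      intro ℓ
      have h := congrFun hveq (Sum.inr ℓ)
      simp only [Sum.elim_inr, Pi.add_apply, Pi.smul_apply, smul_eq_mul,
        Matrix.sub_mulVec, Matrix.smul_mulVec, Matrix.one_mulVec, Pi.sub_apply] at h
      linear_combination -h
    set u : Fin N → ℝ := fun i => ‖x i‖ with hudef
    set w : Fin Mn → ℝ := fun ℓ => ‖y ℓ‖ with hwdef
    have hu0 : ∀ i, 0 ≤ u i := fun i => norm_nonneg _
    have hw0 : ∀ ℓ, 0 ≤ w ℓ := fun ℓ => norm_nonneg _
    have hδμ : δ ≤ ‖μ + (δ : ℂ)‖ := by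
      have h1 : (μ + (δ : ℂ)).re = μ.re + δ := by simp
      have h2 : (μ + (δ : ℂ)).re ≤ ‖μ + (δ : ℂ)‖ := Complex.re_le_norm _
      linarith
    have hβ2δμ : β + 2 * δ ≤ ‖μ + ((β : ℂ) + 2 * δ)‖ := by
      have h1 : (μ + ((β : ℂ) + 2 * δ)).re = μ.re + (β + 2 * δ) := by simp
      have h2 : (μ + ((β : ℂ) + 2 * δ)).re ≤ ‖μ + ((β : ℂ) + 2 * δ)‖ := Complex.re_le_norm _
      linarith
    have hE1m : ∀ i, δ * u i ≤ β * (Cplus tgt *ᵥ w) i := by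
      intro i
      have h2 := congrArg norm (E1 i)
      rw [norm_mul, norm_mul, Complex.norm_real, Real.norm_eq_abs, abs_of_pos hβ] at h2
      have h4 : ‖(((Cplus tgt).map Complex.ofReal) *ᵥ y) i‖ ≤ (Cplus tgt *ᵥ w) i :=
        abs_mulVec_le (Cplus_nonneg tgt) y i
      have h5 : δ * u i ≤ ‖μ + (δ : ℂ)‖ * u i := mul_le_mul_of_nonneg_right hδμ (hu0 i)
      have h6 : β * ‖(((Cplus tgt).map Complex.ofReal) *ᵥ y) i‖ ≤ β * (Cplus tgt *ᵥ w) i :=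
        mul_le_mul_of_nonneg_left h4 hβ.le
      calc δ * u i ≤ ‖μ + (δ : ℂ)‖ * u i := h5
      _ = β * ‖(((Cplus tgt).map Complex.ofReal) *ᵥ y) i‖ := h2
      _ ≤ β * (Cplus tgt *ᵥ w) i := h6
    have hE2m : ∀ ℓ, (β + 2 * δ) * w ℓ ≤
        δ * (((Cminus src)ᵀ *ᵥ u) ℓ) + β * (((lineAdj src tgt)ᵀ *ᵥ w) ℓ) := by
      intro ℓ
      have h2 := congrArg norm (E2 ℓ)
      rw [norm_mul] at h2
      have h3 : ‖(δ : ℂ) * ((((Cminus src)ᵀ).map Complex.ofReal) *ᵥ x) ℓ +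
          (β : ℂ) * ((((nbMatrix src tgt)ᵀ).map Complex.ofReal) *ᵥ y) ℓ‖ ≤
          δ * (((Cminus src)ᵀ *ᵥ u) ℓ) + β * (((lineAdj src tgt)ᵀ *ᵥ w) ℓ) := by
        have h4 : ‖((((Cminus src)ᵀ).map Complex.ofReal) *ᵥ x) ℓ‖ ≤ ((Cminus src)ᵀ *ᵥ u) ℓ :=
          abs_mulVec_le (fun a b => Cminus_nonneg src b a) x ℓ
        have h5 : ‖((((nbMatrix src tgt)ᵀ).map Complex.ofReal) *ᵥ y) ℓ‖ ≤
            ((nbMatrix src tgt)ᵀ *ᵥ w) ℓ :=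
          abs_mulVec_le (fun a b => nb_nonneg src tgt b a) y ℓ
        have h6 : ((nbMatrix src tgt)ᵀ *ᵥ w) ℓ ≤ ((lineAdj src tgt)ᵀ *ᵥ w) ℓ :=
          mulVec_entry_mono_mat (fun a b => nb_le_lineAdj src tgt b a) hw0 ℓ
        calc ‖(δ : ℂ) * ((((Cminus src)ᵀ).map Complex.ofReal) *ᵥ x) ℓ +
            (β : ℂ) * ((((nbMatrix src tgt)ᵀ).map Complex.ofReal) *ᵥ y) ℓ‖
            ≤ ‖(δ : ℂ) * ((((Cminus src)ᵀ).map Complex.ofReal) *ᵥ x) ℓ‖ +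
              ‖(β : ℂ) * ((((nbMatrix src tgt)ᵀ).map Complex.ofReal) *ᵥ y) ℓ‖ := norm_add_le _ _
        _ = δ * ‖((((Cminus src)ᵀ).map Complex.ofReal) *ᵥ x) ℓ‖ +
              β * ‖((((nbMatrix src tgt)ᵀ).map Complex.ofReal) *ᵥ y) ℓ‖ := by
            rw [norm_mul, norm_mul, Complex.norm_real, Complex.norm_real, Real.norm_eq_abs,
              Real.norm_eq_abs, abs_of_pos hβ, abs_of_pos hδ]
        _ ≤ δ * (((Cminus src)ᵀ *ᵥ u) ℓ) + β * (((lineAdj src tgt)ᵀ *ᵥ w) ℓ) := by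
            have := mul_le_mul_of_nonneg_left h4 hδ.le
            have := mul_le_mul_of_nonneg_left (le_trans h5 h6) hβ.le
            linarith
      have h7 : (β + 2 * δ) * w ℓ ≤ ‖μ + ((β : ℂ) + 2 * δ)‖ * w ℓ :=
        mul_le_mul_of_nonneg_right hβ2δμ (hw0 ℓ)
      calc (β + 2 * δ) * w ℓ ≤ ‖μ + ((β : ℂ) + 2 * δ)‖ * w ℓ := h7
      _ = ‖(δ : ℂ) * ((((Cminus src)ᵀ).map Complex.ofReal) *ᵥ x) ℓ +
            (β : ℂ) * ((((nbMatrix src tgt)ᵀ).map Complex.ofReal) *ᵥ y) ℓ‖ := h2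
      _ ≤ δ * (((Cminus src)ᵀ *ᵥ u) ℓ) + β * (((lineAdj src tgt)ᵀ *ᵥ w) ℓ) := h3
    have hE1push : ∀ ℓ, δ * (((Cminus src)ᵀ *ᵥ u) ℓ) ≤ β * (((lineAdj src tgt)ᵀ *ᵥ w) ℓ) := by
      intro ℓ
      have h1 : ((Cminus src)ᵀ *ᵥ fun i => δ * u i) ℓ ≤
          ((Cminus src)ᵀ *ᵥ fun i => β * (Cplus tgt *ᵥ w) i) ℓ :=
        mulVec_entry_mono (fun a b => Cminus_nonneg src b a) hE1m ℓ
      rw [mulVec_scal, mulVec_scal] at h1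
      have h2 : ((Cminus src)ᵀ *ᵥ (Cplus tgt *ᵥ w)) ℓ = (((lineAdj src tgt)ᵀ) *ᵥ w) ℓ := by
        rw [Matrix.mulVec_mulVec, ← lineAdjT_eq src tgt]
      rw [h2] at h1
      exact h1
    have hkey : ∀ ℓ, (1/2 + lamMax A) * w ℓ ≤ ((lineAdj src tgt)ᵀ *ᵥ w) ℓ := by
      intro ℓ
      have h1 := hE2m ℓ
      have h2 := hE1push ℓ
      have h3 : (β + 2 * δ) * w ℓ ≤ 2 * β * (((lineAdj src tgt)ᵀ *ᵥ w) ℓ) := by linarith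
      rw [← hbl] at h3
      nlinarith [hβ, hw0 ℓ]
    have hwne : w ≠ 0 := by
      intro hw
      have hy0 : y = 0 := by
        funext ℓ
        have := congrFun hw ℓ
        simpa [hwdef] using this
      have hμδ : μ + (δ : ℂ) ≠ 0 := by
        intro h
        rw [h] at hδμ
        simp at hδμ
        linarith
      have hx0 : x = 0 := by
        funext i
        have h1 := E1 i
        rw [hy0, Matrix.mulVec_zero] at h1
        simp only [Pi.zero_apply, mul_zero] at h1
        exact (mul_eq_zero.1 h1).resolve_left hμδ
      apply hvne
      rw [hv, hx0, hy0]
      funext t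
      cases t <;> rfl
    have hfinal := cw_to_eig_t src tgt hconn hinj A hA
      (c := 1/2 + lamMax A) (by linarith) hw0 hwne hkey
    linarith
  · -- Part 2
    have hspec : specRad (lineAdj src tgt + nbMatrix src tgt) ≤ 2 * lamMax A := by
      have hdef : specRad (lineAdj src tgt + nbMatrix src tgt) =
          sSup {x : ℝ | ∃ μ, IsEigOf (lineAdj src tgt + nbMatrix src tgt) μ ∧ x = ‖μ‖} := rfl
      rw [hdef]
      apply Real.sSup_le
      · rintro xx ⟨μ, hμ, rfl⟩
        obtain ⟨v, hvne, hveq⟩ := hμ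
        set w : Fin Mn → ℝ := fun ℓ => ‖v ℓ‖ with hwdef
        have hw0 : ∀ ℓ, 0 ≤ w ℓ := fun ℓ => norm_nonneg _
        have hwne : w ≠ 0 := by
          intro hw
          apply hvne
          funext ℓ
          have := congrFun hw ℓ
          simpa [hwdef] using this
        have hkey : ∀ ℓ, (‖μ‖ / 2) * w ℓ ≤ (lineAdj src tgt *ᵥ w) ℓ := by
          intro ℓ
          have h := congrFun hveq ℓ
          have h1 : ‖μ‖ * w ℓ =
              ‖(((lineAdj src tgt + nbMatrix src tgt).map Complex.ofReal) *ᵥ v) ℓ‖ := by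
            rw [h]
            simp only [Pi.smul_apply, smul_eq_mul, norm_mul]
            rfl
          have h2 : ‖(((lineAdj src tgt + nbMatrix src tgt).map Complex.ofReal) *ᵥ v) ℓ‖ ≤
              ((lineAdj src tgt + nbMatrix src tgt) *ᵥ w) ℓ :=
            abs_mulVec_le (fun a b => by
              have := lineAdj_nonneg src tgt a b
              have := nb_nonneg src tgt a b
              simp only [Matrix.add_apply]
              linarith) v ℓ
          have h3 : ((lineAdj src tgt + nbMatrix src tgt) *ᵥ w) ℓ ≤
              ((lineAdj src tgt + lineAdj src tgt) *ᵥ w) ℓ :=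
            mulVec_entry_mono_mat (fun a b => by
              have := nb_le_lineAdj src tgt a b
              simp only [Matrix.add_apply]
              linarith) hw0 ℓ
          have h4 : ((lineAdj src tgt + lineAdj src tgt) *ᵥ w) ℓ =
              (lineAdj src tgt *ᵥ w) ℓ + (lineAdj src tgt *ᵥ w) ℓ := by
            rw [Matrix.add_mulVec]
            simp
          have h5 : ‖μ‖ * w ℓ ≤ 2 * (lineAdj src tgt *ᵥ w) ℓ := by
            rw [h4] at h3
            linarith
          linarith
        by_cases hμ0 : ‖μ‖ ≤ 0
        · linarith
        · push_neg at hμ0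
          have hfin := cw_to_eig_nt src tgt hconn hinj A hA
            (c := ‖μ‖ / 2) (by linarith) hw0 hwne hkey
          linarith
      · linarith
    linarith
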